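/- Let G be a D-regular graph and x~y an edge. Then κ(x,y) ≤ (2 + #Δ(x,y))/D, where #Δ(x,y) is the number of triangles containing the edge x~y (equivalently, the number of common neighbors of x and y). -/

import Mathlib

/-! A transport plan from `μ_x` to `μ_y` can leave in place at most the mass both measures put
on `B_1(x) ∩ B_1(y) = {x, y} ∪ Δ(x,y)`, i.e. `(2 + #Δ(x,y)) / (D + 1)`; all other mass moves
distance at least `1`. Hence `W_1(μ_x, μ_y) ≥ 1 - (2 + #Δ(x,y)) / (D + 1)`, which is the bound
on `κ(x,y)`. -/

open Finset

namespace BMS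

open scoped Classical

variable {V : Type*}

/-- The uniform probability measure on the closed 1-ball of `x` in a `D`-regular graph. -/
noncomputable def mu (G : SimpleGraph V) (D : ℕ) (x : V) : V → ℝ :=
  fun v => if G.dist x v ≤ 1 then 1 / (D + 1) else 0

/-- The L¹-Wasserstein distance between `μ_x` and `μ_y`, as an infimum over transport plans. -/
noncomputable def W1 (G : SimpleGraph V) [Fintype V] (D : ℕ) (x y : V) : ℝ :=
  sInf { c : ℝ | ∃ π : V → V → ℝ,
    (∀ u v, 0 ≤ π u v) ∧
    (∀ u, ∑ v, π u v = mu G D x u) ∧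
    (∀ v, ∑ u, π u v = mu G D y v) ∧
    c = ∑ u, ∑ v, (G.dist u v : ℝ) * π u v }

/-- Ollivier Ricci curvature (Lin–Lu–Yau normalization for regular graphs). -/
noncomputable def kappa (G : SimpleGraph V) [Fintype V] (D : ℕ) (x y : V) : ℝ :=
  ((D + 1) / D) * (1 - W1 G D x y)

/-- `G` is Bonnet–Myers sharp: the infimum of the curvature over edges equals `2 / L`. -/
def BMSharp (G : SimpleGraph V) [Fintype V] (D L : ℕ) : Prop :=
  sInf { k : ℝ | ∃ x y, G.Adj x y ∧ k = kappa G D x y } = 2 / (L : ℝ)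

/-- Number of neighbors of `y` at distance `k` from `x0`. -/
noncomputable def sphDeg (G : SimpleGraph V) [Fintype V] (x0 y : V) (k : ℕ) : ℕ :=
  (Finset.univ.filter (fun v => G.Adj y v ∧ G.dist x0 v = k)).card

/-- Number of triangles containing the edge `x ~ y` (common neighbors of `x` and `y`). -/
noncomputable def tri (G : SimpleGraph V) [Fintype V] (x y : V) : ℕ :=
  (Finset.univ.filter (fun v => G.Adj x v ∧ G.Adj y v)).card

/-- A good optimal transport map from `B_1(a)` to `B_1(b)`: a bijection between the 1-balls,
fixing exactly the vertices of `B_1(a) ∩ B_1(b)` (among the domain), whose cost realizes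
the Wasserstein distance `W1 (μ_a, μ_b)`. -/
def goodMap (G : SimpleGraph V) [Fintype V] (D : ℕ) (a b : V) (T : V → V) : Prop :=
  Set.BijOn T {v | G.dist a v ≤ 1} {v | G.dist b v ≤ 1} ∧
  (∀ v, G.dist a v ≤ 1 → (T v = v ↔ G.dist b v ≤ 1)) ∧
  (1 / (D + 1 : ℝ)) *
      ∑ v ∈ Finset.univ.filter (fun v => G.dist a v ≤ 1), (G.dist v (T v) : ℝ) =
    W1 G D a b

theorem _root_.SimpleGraph.Connected.dist_le_one_iff {G : SimpleGraph V} (hG : G.Connected)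
    {u v : V} : G.dist u v ≤ 1 ↔ v = u ∨ G.Adj u v := by
  rw [← Nat.cast_le (α := ℕ∞), (hG u v).coe_dist_eq_edist, Nat.cast_one,
    SimpleGraph.edist_le_one_iff_adj_or_eq, eq_comm, or_comm]

theorem _root_.SimpleGraph.Connected.sum_sub_sum_min_le_transportCost [Fintype V]
    {G : SimpleGraph V} (hG : G.Connected) {p q : V → ℝ} {π : V → V → ℝ}
    (hπ : ∀ u v, 0 ≤ π u v) (hp : ∀ u, ∑ v, π u v = p u) (hq : ∀ v, ∑ u, π u v = q v) :
    ∑ u, p u - ∑ u, min (p u) (q u) ≤ ∑ u, ∑ v, (G.dist u v : ℝ) * π u v := by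
  have hdiag : ∀ u, π u u ≤ min (p u) (q u) := fun u =>
    le_min (hp u ▸ single_le_sum (fun v _ => hπ u v) (mem_univ u))
      (hq u ▸ single_le_sum (fun v _ => hπ v u) (mem_univ u))
  have hmoved : ∀ u, p u - π u u ≤ ∑ v, (G.dist u v : ℝ) * π u v := fun u =>
    calc p u - π u u = ∑ v ∈ univ.erase u, π u v := by
          rw [sum_erase_eq_sub (mem_univ u), hp]
      _ ≤ ∑ v ∈ univ.erase u, (G.dist u v : ℝ) * π u v :=
          sum_le_sum fun v hv => le_mul_of_one_le_left (hπ u v)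
            (by exact_mod_cast hG.pos_dist_of_ne (ne_of_mem_erase hv).symm)
      _ ≤ ∑ v, (G.dist u v : ℝ) * π u v :=
          sum_le_sum_of_subset_of_nonneg (erase_subset _ _)
            fun v _ _ => mul_nonneg (Nat.cast_nonneg _) (hπ u v)
  calc ∑ u, p u - ∑ u, min (p u) (q u) ≤ ∑ u, (p u - π u u) := by
        rw [sum_sub_distrib]
        exact sub_le_sub_left (sum_le_sum fun u _ => hdiag u) _
    _ ≤ _ := sum_le_sum fun u _ => hmoved u

theorem card_filter_dist_le_one [Fintype V] {G : SimpleGraph V} (hconn : G.Connected) {D : ℕ}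
    (hreg : G.IsRegularOfDegree D) (z : V) :
    (univ.filter fun v => G.dist z v ≤ 1).card = D + 1 := by
  have hball : (univ.filter fun v => G.dist z v ≤ 1) = insert z (G.neighborFinset z) := by
    ext v
    simp [hconn.dist_le_one_iff]
  rw [hball, card_insert_of_notMem (by simp), G.card_neighborFinset_eq_degree, hreg z]

theorem card_filter_dist_le_one_and [Fintype V] {G : SimpleGraph V} (hconn : G.Connected)
    {x y : V} (hxy : G.Adj x y) :
    (univ.filter fun v => G.dist x v ≤ 1 ∧ G.dist y v ≤ 1).card = tri G x y + 2 := by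
  have hinter : (univ.filter fun v => G.dist x v ≤ 1 ∧ G.dist y v ≤ 1) =
      insert x (insert y (univ.filter fun v => G.Adj x v ∧ G.Adj y v)) := by
    ext v
    simp only [mem_filter, mem_univ, true_and, mem_insert, hconn.dist_le_one_iff]
    constructor
    · rintro ⟨rfl | hx, rfl | hy⟩ <;> tauto
    · rintro (rfl | rfl | ⟨hx, hy⟩)
      exacts [⟨Or.inl rfl, Or.inr hxy.symm⟩, ⟨Or.inr hxy, Or.inl rfl⟩, ⟨Or.inr hx, Or.inr hy⟩]
  rw [hinter, card_insert_of_notMem (by simp [hxy.ne]), card_insert_of_notMem (by simp)]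
  rfl

theorem sum_mu [Fintype V] {G : SimpleGraph V} (hconn : G.Connected) {D : ℕ}
    (hreg : G.IsRegularOfDegree D) (z : V) : ∑ v, mu G D z v = 1 := by
  simp only [mu]
  rw [← sum_filter, sum_const, card_filter_dist_le_one hconn hreg, nsmul_eq_mul]
  push_cast
  field_simp

theorem sum_min_mu [Fintype V] {G : SimpleGraph V} (hconn : G.Connected) (D : ℕ) {x y : V}
    (hxy : G.Adj x y) :
    ∑ v, min (mu G D x v) (mu G D y v) = (tri G x y + 2) / (D + 1) := by
  have hmin : ∀ v, min (mu G D x v) (mu G D y v) =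
      if G.dist x v ≤ 1 ∧ G.dist y v ≤ 1 then 1 / ((D : ℝ) + 1) else 0 := by
    intro v
    simp only [mu]
    split_ifs <;> simp_all [Nat.cast_add_one_pos D |>.le]
  simp_rw [hmin, ← sum_filter, sum_const, card_filter_dist_le_one_and hconn hxy, nsmul_eq_mul]
  push_cast
  ring

theorem one_sub_sum_min_mu_le_W1 [Fintype V] {G : SimpleGraph V} (hconn : G.Connected) {D : ℕ}
    (hreg : G.IsRegularOfDegree D) (x y : V) :
    1 - ∑ v, min (mu G D x v) (mu G D y v) ≤ W1 G D x y := by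
  refine le_csInf ⟨_, fun u v => mu G D x u * mu G D y v, fun u v => ?_, fun u => ?_, fun v => ?_,
    rfl⟩ ?_
  · unfold mu
    positivity
  · rw [← mul_sum, sum_mu hconn hreg, mul_one]
  · rw [← sum_mul, sum_mu hconn hreg, one_mul]
  · rintro c ⟨π, hπ, hx, hy, rfl⟩
    simpa only [sum_mu hconn hreg] using hconn.sum_sub_sum_min_le_transportCost hπ hx hy

theorem stmt_general [Fintype V] (G : SimpleGraph V) (hconn : G.Connected)
    (D : ℕ) (hreg : G.IsRegularOfDegree D)
    (x y : V) (hxy : G.Adj x y) :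
    kappa G D x y ≤ (2 + (tri G x y : ℝ)) / D := by
  have hW1 : 1 - (tri G x y + 2) / (D + 1) ≤ W1 G D x y :=
    sum_min_mu hconn D hxy ▸ one_sub_sum_min_mu_le_W1 hconn hreg x y
  calc kappa G D x y ≤ ((D + 1) / D) * ((tri G x y + 2) / (D + 1)) :=
        mul_le_mul_of_nonneg_left (by linarith) (by positivity)
    _ = (2 + (tri G x y : ℝ)) / D := by
        rw [div_mul_div_comm, mul_comm (D : ℝ), mul_div_mul_left _ _ (Nat.cast_add_one_ne_zero D),
          add_comm]

theorem stmt [Fintype V] (G : SimpleGraph V) (hconn : G.Connected)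
    (D : ℕ) (hD : 0 < D) (hreg : G.IsRegularOfDegree D)
    (x y : V) (hxy : G.Adj x y) :
    kappa G D x y ≤ (2 + (tri G x y : ℝ)) / D :=
  stmt_general G hconn D hreg x y hxy

end BMS
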